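/- arXiv:1002.1960 — 3 statements merged into one kernel-verified Lean document; each statement's English description precedes it below -/
import Mathlib

section
/- The Coxeter graph Γ is a connected 3-regular simple graph on 28 vertices with girth 7 and diameter 4. -/
/-- Vertex set of the Coxeter graph: four concentric 7-tuples `u, v, t, z`. -/
abbrev CoxeterVertex := Fin 4 × ZMod 7

/-- Base (asymmetric) adjacency relation for the Coxeter graph:
`u_x ~ u_{x+1}`, `v_x ~ v_{x+2}`, `t_x ~ t_{x+3}`, and `z_x ~ u_x, v_x, t_x`. -/
def coxeterRel : CoxeterVertex → CoxeterVertex → Prop := fun p q =>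
  (p.1 = 0 ∧ q.1 = 0 ∧ q.2 = p.2 + 1) ∨
  (p.1 = 1 ∧ q.1 = 1 ∧ q.2 = p.2 + 2) ∨
  (p.1 = 2 ∧ q.1 = 2 ∧ q.2 = p.2 + 3) ∨
  (p.1 = 3 ∧ (q.1 = 0 ∨ q.1 = 1 ∨ q.1 = 2) ∧ q.2 = p.2)

/-- The Coxeter graph on 28 vertices. -/
def coxeterGraph : SimpleGraph CoxeterVertex := SimpleGraph.fromRel coxeterRel

instance : DecidableRel coxeterRel := fun p q => by unfold coxeterRel; infer_instance

instance : DecidableRel coxeterGraph.Adj := fun p q =>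
  decidable_of_iff _ (SimpleGraph.fromRel_adj coxeterRel p q).symm

/-- One step of breadth-first search: add all neighbours of the current set. -/
def ballStep (G : SimpleGraph CoxeterVertex) [DecidableRel G.Adj]
    (s : Finset CoxeterVertex) : Finset CoxeterVertex :=
  s ∪ Finset.univ.filter (fun v => ∃ u ∈ s, G.Adj u v)

instance (e : Sym2 CoxeterVertex) : DecidableRel (coxeterGraph.deleteEdges {e}).Adj :=
  fun p q => decidable_of_iff (coxeterGraph.Adj p q ∧ ¬ s(p, q) = e)
    (by rw [SimpleGraph.deleteEdges_adj]; simp)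

lemma mem_ballStep_iter (G : SimpleGraph CoxeterVertex) [DecidableRel G.Adj]
    (u : CoxeterVertex) (n : ℕ) (v : CoxeterVertex) :
    v ∈ (ballStep G)^[n] {u} ↔ ∃ w : G.Walk v u, w.length ≤ n := by
  induction n generalizing v with
  | zero =>
    simp only [Function.iterate_zero, id_eq, Finset.mem_singleton]
    constructor
    · rintro rfl; exact ⟨SimpleGraph.Walk.nil, by simp⟩
    · rintro ⟨w, hw⟩
      cases w with
      | nil => rfl
      | cons h p => simp at hw
  | succ n ih =>
    rw [Function.iterate_succ_apply']
    simp only [ballStep, Finset.mem_union, Finset.mem_filter, Finset.mem_univ, true_and]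
    constructor
    · rintro (h | ⟨x, hx, hadj⟩)
      · obtain ⟨w, hw⟩ := (ih v).mp h
        exact ⟨w, hw.trans (Nat.le_succ _)⟩
      · obtain ⟨w, hw⟩ := (ih x).mp hx
        exact ⟨SimpleGraph.Walk.cons hadj.symm w, by simpa using hw⟩
    · rintro ⟨w, hw⟩
      cases w with
      | nil => exact Or.inl ((ih u).mpr ⟨SimpleGraph.Walk.nil, by simp⟩)
      | @cons _ x _ h p =>
        refine Or.inr ⟨x, (ih x).mpr ⟨p, ?_⟩, h.symm⟩
        simpa using Nat.succ_le_succ_iff.mp hw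

set_option maxHeartbeats 16000000 in
set_option maxRecDepth 40000 in
lemma coxeter_ball_four : ∀ u : CoxeterVertex,
    (ballStep coxeterGraph)^[4] {u} = Finset.univ := by decide

set_option maxHeartbeats 2000000 in
set_option maxRecDepth 10000 in
lemma coxeter_far_pair :
    ((1 : Fin 4), (3 : ZMod 7)) ∉
      (ballStep coxeterGraph)^[3] {((0 : Fin 4), (0 : ZMod 7))} := by decide

set_option maxHeartbeats 400000000 in
set_option maxRecDepth 100000 in
lemma coxeter_no_short_cycle_0 : ∀ (x : ZMod 7) (b : CoxeterVertex),
    coxeterGraph.Adj ((0 : Fin 4), x) b →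
    ((0 : Fin 4), x) ∉ (ballStep (coxeterGraph.deleteEdges {s(((0 : Fin 4), x), b)}))^[5] {b} := by
  decide

set_option maxHeartbeats 400000000 in
set_option maxRecDepth 100000 in
lemma coxeter_no_short_cycle_1 : ∀ (x : ZMod 7) (b : CoxeterVertex),
    coxeterGraph.Adj ((1 : Fin 4), x) b →
    ((1 : Fin 4), x) ∉ (ballStep (coxeterGraph.deleteEdges {s(((1 : Fin 4), x), b)}))^[5] {b} := by
  decide

set_option maxHeartbeats 400000000 in
set_option maxRecDepth 100000 in
lemma coxeter_no_short_cycle_2 : ∀ (x : ZMod 7) (b : CoxeterVertex),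
    coxeterGraph.Adj ((2 : Fin 4), x) b →
    ((2 : Fin 4), x) ∉ (ballStep (coxeterGraph.deleteEdges {s(((2 : Fin 4), x), b)}))^[5] {b} := by
  decide

set_option maxHeartbeats 400000000 in
set_option maxRecDepth 100000 in
lemma coxeter_no_short_cycle_3 : ∀ (x : ZMod 7) (b : CoxeterVertex),
    coxeterGraph.Adj ((3 : Fin 4), x) b →
    ((3 : Fin 4), x) ∉ (ballStep (coxeterGraph.deleteEdges {s(((3 : Fin 4), x), b)}))^[5] {b} := by
  decide

lemma coxeter_no_short_cycle : ∀ a b : CoxeterVertex, coxeterGraph.Adj a b →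
    a ∉ (ballStep (coxeterGraph.deleteEdges {s(a, b)}))^[5] {b} := by
  rintro ⟨i, x⟩ b
  fin_cases i
  · exact coxeter_no_short_cycle_0 x b
  · exact coxeter_no_short_cycle_1 x b
  · exact coxeter_no_short_cycle_2 x b
  · exact coxeter_no_short_cycle_3 x b

/-- A 7-cycle in the Coxeter graph: `u_0 u_1 u_2 u_3 u_4 u_5 u_6 u_0`. -/
def coxeterSevenCycle : coxeterGraph.Walk ((0 : Fin 4), (0 : ZMod 7)) ((0 : Fin 4), (0 : ZMod 7)) :=
  .cons (v := ((0 : Fin 4), (1 : ZMod 7))) (by decide)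
    (.cons (v := ((0 : Fin 4), (2 : ZMod 7))) (by decide)
    (.cons (v := ((0 : Fin 4), (3 : ZMod 7))) (by decide)
    (.cons (v := ((0 : Fin 4), (4 : ZMod 7))) (by decide)
    (.cons (v := ((0 : Fin 4), (5 : ZMod 7))) (by decide)
    (.cons (v := ((0 : Fin 4), (6 : ZMod 7))) (by decide)
    (.cons (by decide) .nil))))))

lemma coxeterSevenCycle_length : coxeterSevenCycle.length = 7 := by decide

lemma coxeterSevenCycle_isCycle : coxeterSevenCycle.IsCycle := by
  rw [SimpleGraph.Walk.isCycle_def]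
  refine ⟨⟨by decide⟩, ?_, by decide⟩
  intro h
  have := congrArg SimpleGraph.Walk.length h
  rw [coxeterSevenCycle_length] at this
  simp at this

lemma coxeter_egirth : coxeterGraph.egirth = 7 := by
  apply le_antisymm
  · calc coxeterGraph.egirth ≤ (coxeterSevenCycle.length : ℕ∞) := by
          rw [SimpleGraph.egirth]
          exact iInf_le_of_le _ (iInf_le_of_le coxeterSevenCycle
            (iInf_le_of_le coxeterSevenCycle_isCycle le_rfl))
      _ = 7 := by rw [coxeterSevenCycle_length]; rfl
  · rw [SimpleGraph.le_egirth]
    intro a w hw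
    cases w with
    | nil => exact absurd rfl hw.ne_nil
    | @cons _ b _ h p =>
      have hnd : s(a, b) ∉ p.edges := by
        have := hw.isTrail.edges_nodup
        rw [SimpleGraph.Walk.edges_cons] at this
        exact (List.nodup_cons.mp this).1
      have hp : ∀ e ∈ p.edges, e ∉ ({s(a, b)} : Set (Sym2 CoxeterVertex)) := by
        intro e he
        simp only [Set.mem_singleton_iff]
        rintro rfl
        exact hnd he
      set q := p.toDeleteEdges {s(a, b)} hp with hq
      have hlen : q.length = p.length := SimpleGraph.Walk.length_transfer _ _
      have h6 : 6 ≤ q.length := by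
        by_contra hcon
        push_neg at hcon
        have : a ∈ (ballStep (coxeterGraph.deleteEdges {s(a, b)}))^[5] {b} := by
          rw [mem_ballStep_iter]
          exact ⟨q.reverse, by rw [SimpleGraph.Walk.length_reverse]; omega⟩
        exact coxeter_no_short_cycle a b h this
      have : 7 ≤ (SimpleGraph.Walk.cons h p).length := by
        rw [SimpleGraph.Walk.length_cons]; omega
      exact_mod_cast this

lemma coxeter_edist_le_four : ∀ u v : CoxeterVertex, coxeterGraph.edist u v ≤ 4 := by
  intro u v
  have hv : v ∈ (ballStep coxeterGraph)^[4] {u} := by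
    rw [coxeter_ball_four u]; exact Finset.mem_univ v
  obtain ⟨w, hw⟩ := (mem_ballStep_iter coxeterGraph u 4 v).mp hv
  calc coxeterGraph.edist u v = coxeterGraph.edist v u := SimpleGraph.edist_comm
    _ ≤ (w.length : ℕ∞) := SimpleGraph.edist_le w
    _ ≤ 4 := by exact_mod_cast hw

lemma coxeter_connected : coxeterGraph.Connected := by
  rw [SimpleGraph.connected_iff_exists_forall_reachable]
  refine ⟨((0 : Fin 4), (0 : ZMod 7)), fun v => ?_⟩
  have hv : v ∈ (ballStep coxeterGraph)^[4] {((0 : Fin 4), (0 : ZMod 7))} := by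
    rw [coxeter_ball_four]; exact Finset.mem_univ v
  obtain ⟨w, -⟩ := (mem_ballStep_iter coxeterGraph _ 4 v).mp hv
  exact ⟨w.reverse⟩

lemma coxeter_ediam : coxeterGraph.ediam = 4 := by
  apply le_antisymm
  · exact SimpleGraph.ediam_le_of_edist_le coxeter_edist_le_four
  · refine le_trans ?_ (SimpleGraph.edist_le_ediam
      (u := ((0 : Fin 4), (0 : ZMod 7))) (v := ((1 : Fin 4), (3 : ZMod 7))))
    by_contra hcon
    push_neg at hcon
    have hnt : coxeterGraph.edist ((0 : Fin 4), (0 : ZMod 7)) ((1 : Fin 4), (3 : ZMod 7)) ≠ ⊤ :=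
      ne_top_of_lt (hcon.trans_le le_top)
    obtain ⟨p, hp⟩ := SimpleGraph.exists_walk_of_edist_ne_top hnt
    have hplen : p.length ≤ 3 := by
      rw [← hp] at hcon
      exact_mod_cast Order.le_of_lt_add_one (by exact_mod_cast hcon)
    have : ((1 : Fin 4), (3 : ZMod 7)) ∈
        (ballStep coxeterGraph)^[3] {((0 : Fin 4), (0 : ZMod 7))} := by
      rw [mem_ballStep_iter]
      exact ⟨p.reverse, by rw [SimpleGraph.Walk.length_reverse]; exact hplen⟩
    exact coxeter_far_pair this

/-- The Coxeter graph is a connected cubic simple graph on 28 vertices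
with girth 7 and diameter 4. -/
theorem coxeterGraph_is_connected_cubic_girth_seven_diam_four :
    Fintype.card CoxeterVertex = 28 ∧
    coxeterGraph.Connected ∧
    coxeterGraph.IsRegularOfDegree 3 ∧
    coxeterGraph.girth = 7 ∧
    coxeterGraph.diam = 4 := by
  refine ⟨by decide, coxeter_connected, show ∀ v : CoxeterVertex, coxeterGraph.degree v = 3 from by decide, ?_, ?_⟩
  · rw [SimpleGraph.girth, coxeter_egirth]; rfl
  · rw [SimpleGraph.diam, coxeter_ediam]; rfl
end

section
/- Every path of length 2 in the Coxeter graph Γ (i.e., every 2-path u–v–w with u,w distinct neighbors of v) is contained in exactly two of the 7-cycles of Γ. -/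
/-- A 7-cycle of a graph `G` is a subgraph of `G` isomorphic to the cycle graph
on 7 vertices. -/
def IsSevenCycle {V : Type*} {G : SimpleGraph V} (H : G.Subgraph) : Prop :=
  Nonempty (H.coe ≃g SimpleGraph.cycleGraph 7)

/-! A 7-cycle `H` of a graph through the path `u v w` is the image of exactly one injective
homomorphism `f` from the cycle graph `C₇` with `f 0 = u`, `f 1 = v`, `f 2 = w`: such an `f`
exists because rotations and reflections of `C₇` move any path of length two of `C₇` to
`0, 1, 2`, and it is unique because each later vertex `f (i + 1)` is forced to be the
`H`-neighbour of `f i` other than `f (i - 1)`. These homomorphisms correspond to quadruples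
`(a, b, c, d)` that make `u v w a b c d` a closed walk with seven distinct vertices. For the
Coxeter graph, the kernel enumerates the non-backtracking walks from each of the 168 paths of
length two and finds exactly two such quadruples every time. -/

lemma Fin.two_eq_one_add_one {n : ℕ} [NeZero n] : (2 : Fin n) = 1 + 1 := by
  ext; simp [Fin.val_add]

lemma Fin.add_one_ne_sub_one {n : ℕ} (i : Fin (n + 3)) : i + 1 ≠ i - 1 := by
  intro h
  have h2 : (1 + 1 : Fin (n + 3)) = 0 := by rw [← sub_eq_zero.mpr h]; abel
  simp [Fin.ext_iff, Fin.val_add, Nat.mod_eq_of_lt] at h2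

namespace SimpleGraph

variable {V : Type*} {G : SimpleGraph V} {n : ℕ}

lemma cycleGraph_adj_iff {i j : Fin (n + 3)} :
    (cycleGraph (n + 3)).Adj i j ↔ j = i - 1 ∨ j = i + 1 := by
  rw [← mem_neighborSet, cycleGraph_neighborSet (n := n + 1)]; rfl

lemma exists_cycleGraph_iso_apply_eq {x y z : Fin (n + 3)} (hxy : (cycleGraph (n + 3)).Adj x y)
    (hyz : (cycleGraph (n + 3)).Adj y z) (hxz : x ≠ z) :
    ∃ σ : cycleGraph (n + 3) ≃g cycleGraph (n + 3), σ 0 = x ∧ σ 1 = y ∧ σ 2 = z := by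
  rw [cycleGraph_adj_iff] at hyz
  rw [(cycleGraph _).adj_comm, cycleGraph_adj_iff] at hxy
  rcases hxy with rfl | rfl <;> rcases hyz with rfl | rfl
  · exact absurd rfl hxz
  · refine ⟨⟨Equiv.addRight (y - 1), ?_⟩, ?_, ?_, ?_⟩
    · intro i j
      simp only [Equiv.coe_addRight, cycleGraph_adj, add_sub_add_right_eq_sub]
    all_goals simp only [RelIso.coe_fn_mk, Equiv.coe_addRight, Fin.two_eq_one_add_one]; abel
  · refine ⟨⟨Equiv.subLeft (y + 1), ?_⟩, ?_, ?_, ?_⟩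
    · intro i j
      simp only [Equiv.subLeft_apply, cycleGraph_adj, sub_sub_sub_cancel_left, or_comm]
    all_goals simp only [RelIso.coe_fn_mk, Equiv.subLeft_apply, Fin.two_eq_one_add_one]; abel
  · exact absurd rfl hxz

namespace Copy

variable {α β : Type*} {A : SimpleGraph α} {B : SimpleGraph β}

lemma toSubgraph_adj_iff (f : Copy A G) {a b : V} :
    f.toSubgraph.Adj a b ↔ ∃ x y, A.Adj x y ∧ f x = a ∧ f y = b := by
  simp [Relation.Map]

lemma toSubgraph_adj_apply_iff (f : Copy A G) {x : α} {b : V} :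
    f.toSubgraph.Adj (f x) b ↔ ∃ y, A.Adj x y ∧ f y = b := by
  rw [toSubgraph_adj_iff]
  constructor
  · rintro ⟨x', y, h, hx, rfl⟩
    obtain rfl := f.injective hx
    exact ⟨y, h, rfl⟩
  · rintro ⟨y, h, rfl⟩
    exact ⟨x, y, h, rfl, rfl⟩

lemma toSubgraph_comp_iso (f : Copy A G) (σ : B ≃g A) :
    (f.comp σ.toCopy).toSubgraph = f.toSubgraph := by
  ext a b
  · simp [σ.surjective.exists]
  · simp only [toSubgraph_adj_iff, comp_apply]
    constructor
    · rintro ⟨x, y, h, rfl, rfl⟩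
      exact ⟨σ x, σ y, σ.map_adj_iff.2 h, rfl, rfl⟩
    · rintro ⟨x, y, h, rfl, rfl⟩
      exact ⟨σ.symm x, σ.symm y, σ.symm.map_adj_iff.2 h, by simp, by simp⟩

variable {n : ℕ}

lemma adj_apply_add_one (f : Copy (cycleGraph (n + 3)) G) (i : Fin (n + 3)) :
    G.Adj (f i) (f (i + 1)) :=
  f.toHom.map_adj (cycleGraph_adj_iff.2 (Or.inr rfl))

lemma toSubgraph_adj_cycle_iff (f : Copy (cycleGraph (n + 3)) G) (i : Fin (n + 3)) {b : V} :
    f.toSubgraph.Adj (f i) b ↔ b = f (i - 1) ∨ b = f (i + 1) := by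
  simp only [toSubgraph_adj_apply_iff, cycleGraph_adj_iff, or_and_right, exists_or, exists_eq_left,
    eq_comm (b := b)]

lemma toSubgraph_adj_apply_add_one (f : Copy (cycleGraph (n + 3)) G) (i : Fin (n + 3)) :
    f.toSubgraph.Adj (f i) (f (i + 1)) :=
  (f.toSubgraph_adj_cycle_iff i).2 (Or.inr rfl)

open Fin.NatCast in
lemma eq_of_toSubgraph_eq {f g : Copy (cycleGraph (n + 3)) G} (h : f.toSubgraph = g.toSubgraph)
    (h0 : f 0 = g 0) (h1 : f 1 = g 1) : f = g := by
  have step : ∀ i, f (i - 1) = g (i - 1) → f i = g i → f (i + 1) = g (i + 1) := by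
    intro i hprev hi
    have hadj := g.toSubgraph_adj_apply_add_one i
    rw [← h, ← hi, toSubgraph_adj_cycle_iff, hprev] at hadj
    exact (hadj.resolve_left fun heq => Fin.add_one_ne_sub_one i (g.injective heq)).symm
  have key : ∀ k : ℕ, f (k : Fin (n + 3)) = g k ∧ f ((k : Fin (n + 3)) + 1) = g (k + 1) := by
    intro k
    induction k with
    | zero => simpa using ⟨h0, h1⟩
    | succ k ih =>
      rw [Nat.cast_succ]
      exact ⟨ih.2, step _ (by rw [add_sub_cancel_right]; exact ih.1) ih.2⟩
  ext i
  simpa using (key i).1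

lemma exists_toSubgraph_eq_apply_eq (f : Copy (cycleGraph (n + 3)) G) {u v w : V}
    (huv : f.toSubgraph.Adj u v) (hvw : f.toSubgraph.Adj v w) (huw : u ≠ w) :
    ∃ f' : Copy (cycleGraph (n + 3)) G,
      f'.toSubgraph = f.toSubgraph ∧ f' 0 = u ∧ f' 1 = v ∧ f' 2 = w := by
  obtain ⟨x, y, hxy, rfl, rfl⟩ := f.toSubgraph_adj_iff.1 huv
  obtain ⟨z, hyz, rfl⟩ := f.toSubgraph_adj_apply_iff.1 hvw
  obtain ⟨σ, h0, h1, h2⟩ := exists_cycleGraph_iso_apply_eq hxy hyz (ne_of_apply_ne f huw)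
  exact ⟨f.comp σ.toCopy, f.toSubgraph_comp_iso σ, by simp [h0], by simp [h1], by simp [h2]⟩

end Copy

def cycleCopy (g : Fin (n + 3) → V) (hg : Function.Injective g)
    (hadj : ∀ i, G.Adj (g i) (g (i + 1))) : Copy (cycleGraph (n + 3)) G where
  toHom := ⟨g, fun {i j} h => by
    rcases cycleGraph_adj_iff.1 h with rfl | rfl
    · simpa using (hadj (i - 1)).symm
    · exact hadj i⟩
  injective' := hg

theorem ncard_setOf_iso_cycleGraph_adj_adj {u v w : V} (huw : u ≠ w) :
    {H : G.Subgraph | Nonempty (cycleGraph (n + 3) ≃g H.coe) ∧ H.Adj u v ∧ H.Adj v w}.ncard =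
      {f : Copy (cycleGraph (n + 3)) G | f 0 = u ∧ f 1 = v ∧ f 2 = w}.ncard := by
  have himage :
      {H : G.Subgraph | Nonempty (cycleGraph (n + 3) ≃g H.coe) ∧ H.Adj u v ∧ H.Adj v w} =
      Copy.toSubgraph '' {f : Copy (cycleGraph (n + 3)) G | f 0 = u ∧ f 1 = v ∧ f 2 = w} := by
    ext H
    constructor
    · rintro ⟨hH, huv, hvw⟩
      obtain ⟨f, rfl⟩ : H ∈ Set.range (Copy.toSubgraph (A := cycleGraph (n + 3))) := by
        rwa [Copy.range_toSubgraph]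
      obtain ⟨f', hf', h0, h1, h2⟩ := f.exists_toSubgraph_eq_apply_eq huv hvw huw
      exact ⟨f', ⟨h0, h1, h2⟩, hf'⟩
    · rintro ⟨f, ⟨rfl, rfl, rfl⟩, rfl⟩
      refine ⟨⟨f.isoToSubgraph⟩, f.toSubgraph_adj_apply_add_one 0, ?_⟩
      simpa [Fin.two_eq_one_add_one] using f.toSubgraph_adj_apply_add_one 1
  rw [himage, Set.InjOn.ncard_image]
  rintro f ⟨hf0, hf1, -⟩ g ⟨hg0, hg1, -⟩ h
  exact Copy.eq_of_toSubgraph_eq h (hf0.trans hg0.symm) (hf1.trans hg1.symm)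

section SevenCycleCompletions

variable (G) [G.LocallyFinite] [DecidableRel G.Adj] [DecidableEq V]

/-- The `erase`s are implied by the injectivity condition; they only prune the search, which keeps
the kernel computation for the Coxeter graph fast. -/
def sevenCycleCompletions (u v w : V) : Finset (V × V × V × V) :=
  ((G.neighborFinset w).erase v).biUnion fun a => ((G.neighborFinset a).erase w).biUnion fun b =>
    ((G.neighborFinset b).erase a).biUnion fun c =>
      (((G.neighborFinset c).erase b).filter fun d =>
        G.Adj d u ∧ Function.Injective ![u, v, w, a, b, c, d]).image fun d => (a, b, c, d)

variable {G}

lemma mem_sevenCycleCompletions {u v w a b c d : V} :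
    (a, b, c, d) ∈ G.sevenCycleCompletions u v w ↔ G.Adj w a ∧ G.Adj a b ∧ G.Adj b c ∧
      G.Adj c d ∧ G.Adj d u ∧ Function.Injective ![u, v, w, a, b, c, d] := by
  simp only [sevenCycleCompletions, Finset.mem_biUnion, Finset.mem_image, Finset.mem_filter,
    Finset.mem_erase, mem_neighborFinset, Prod.mk.injEq]
  constructor
  · rintro ⟨a, ⟨-, hwa⟩, b, ⟨-, hab⟩, c, ⟨-, hbc⟩, d, ⟨⟨-, hcd⟩, hdu, hinj⟩,
      rfl, rfl, rfl, rfl⟩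
    exact ⟨hwa, hab, hbc, hcd, hdu, hinj⟩
  · rintro ⟨hwa, hab, hbc, hcd, hdu, hinj⟩
    exact ⟨a, ⟨hinj.ne (by decide : (3 : Fin 7) ≠ 1), hwa⟩,
      b, ⟨hinj.ne (by decide : (4 : Fin 7) ≠ 2), hab⟩,
      c, ⟨hinj.ne (by decide : (5 : Fin 7) ≠ 3), hbc⟩,
      d, ⟨⟨hinj.ne (by decide : (6 : Fin 7) ≠ 4), hcd⟩, hdu, hinj⟩, rfl, rfl, rfl, rfl⟩

lemma ncard_copies_eq_card_sevenCycleCompletions {u v w : V} (huv : G.Adj u v)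
    (hvw : G.Adj v w) :
    {f : Copy (cycleGraph 7) G | f 0 = u ∧ f 1 = v ∧ f 2 = w}.ncard =
      (G.sevenCycleCompletions u v w).card := by
  rw [← Set.ncard_coe_finset]
  refine Set.ncard_congr (fun f _ => (f 3, f 4, f 5, f 6)) ?_ ?_ ?_
  · rintro f ⟨rfl, rfl, rfl⟩
    have hf : ⇑f = ![f 0, f 1, f 2, f 3, f 4, f 5, f 6] := by
      funext i; fin_cases i <;> rfl
    rw [Finset.mem_coe, mem_sevenCycleCompletions, ← hf]
    exact ⟨f.adj_apply_add_one 2, f.adj_apply_add_one 3, f.adj_apply_add_one 4,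
      f.adj_apply_add_one 5, f.adj_apply_add_one 6, f.injective⟩
  · rintro f g ⟨hf0, hf1, hf2⟩ ⟨hg0, hg1, hg2⟩ h
    simp only [Prod.mk.injEq] at h
    ext i
    fin_cases i
    exacts [hf0.trans hg0.symm, hf1.trans hg1.symm, hf2.trans hg2.symm,
      h.1, h.2.1, h.2.2.1, h.2.2.2]
  · rintro ⟨a, b, c, d⟩ habcd
    rw [Finset.mem_coe, mem_sevenCycleCompletions] at habcd
    obtain ⟨hwa, hab, hbc, hcd, hdu, hinj⟩ := habcd
    refine ⟨cycleCopy ![u, v, w, a, b, c, d] hinj ?_, ⟨rfl, rfl, rfl⟩, rfl⟩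
    intro i
    fin_cases i
    exacts [huv, hvw, hwa, hab, hbc, hcd, hdu]

end SevenCycleCompletions

end SimpleGraph

open SimpleGraph

instance inst_s2 : DecidableRel coxeterRel := fun p q => by unfold coxeterRel; infer_instance

instance inst_s2_2 : DecidableRel coxeterGraph.Adj := inferInstanceAs (DecidableRel (fromRel coxeterRel).Adj)

/-- Explicit neighbourhoods, so that the kernel never has to search all 28 vertices. -/
def coxeterNeighbors (p : CoxeterVertex) : Finset CoxeterVertex :=
  if p.1 = 0 then {(0, p.2 + 1), (0, p.2 - 1), (3, p.2)}
  else if p.1 = 1 then {(1, p.2 + 2), (1, p.2 - 2), (3, p.2)}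
  else if p.1 = 2 then {(2, p.2 + 3), (2, p.2 - 3), (3, p.2)}
  else {(0, p.2), (1, p.2), (2, p.2)}

lemma mem_coxeterNeighbors : ∀ p q, q ∈ coxeterNeighbors p ↔ coxeterGraph.Adj p q := by
  decide +kernel

instance (p : CoxeterVertex) : Fintype (coxeterGraph.neighborSet p) :=
  Fintype.ofFinset (coxeterNeighbors p) (mem_coxeterNeighbors p)

lemma coxeterGraph_card_sevenCycleCompletions {u v w : CoxeterVertex}
    (huv : coxeterGraph.Adj u v) (hvw : coxeterGraph.Adj v w) (huw : u ≠ w) :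
    (coxeterGraph.sevenCycleCompletions u v w).card = 2 := by
  have h : ∀ v, ∀ u ∈ coxeterGraph.neighborFinset v, ∀ w ∈ coxeterGraph.neighborFinset v,
      u ≠ w → (coxeterGraph.sevenCycleCompletions u v w).card = 2 := by
    decide +kernel
  exact h v u (mem_neighborFinset _ _ _ |>.2 huv.symm) w (mem_neighborFinset _ _ _ |>.2 hvw) huw

lemma isSevenCycle_iff_nonempty_iso {V : Type*} {G : SimpleGraph V} {H : G.Subgraph} :
    IsSevenCycle H ↔ Nonempty (cycleGraph 7 ≃g H.coe) :=
  ⟨fun ⟨e⟩ => ⟨e.symm⟩, fun ⟨e⟩ => ⟨e.symm⟩⟩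

/-- Every 2-path `u – v – w` of the Coxeter graph lies in exactly two of its
7-cycles (where containment means that both edges of the path are edges of the
cycle subgraph). -/
theorem coxeterGraph_two_path_in_exactly_two_sevenCycles
    (u v w : CoxeterVertex) (huv : coxeterGraph.Adj u v) (hvw : coxeterGraph.Adj v w)
    (huw : u ≠ w) :
    {H : coxeterGraph.Subgraph | IsSevenCycle H ∧ H.Adj u v ∧ H.Adj v w}.ncard = 2 := by
  simp only [isSevenCycle_iff_nonempty_iso]
  rw [ncard_setOf_iso_cycleGraph_adj_adj (n := 4) huw,
    ncard_copies_eq_card_sevenCycleCompletions huv hvw]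
  exact coxeterGraph_card_sevenCycleCompletions huv hvw huw
end

section
/- There exists a simple graph K on 24 vertices (the Klein quartic graph) which is connected, 7-regular, of diameter 3, and distance-regular with intersection array {7,4,1; 1,2,7}: for all vertices u, v with dist(u,v) = i (0 ≤ i ≤ 3), the number of neighbors of v at distance i+1 from u equals b_i and the number of neighbors of v at distance i−1 from u equals c_i, where b₀ = 7, b₁ = 4, b₂ = 1, c₁ = 1, c₂ = 2, c₃ = 7. -/
/-!
The graph is Mathon's antipodal 3-cover of `K₈`: its vertices are the nonzero vectors of `𝔽₇²`
modulo `±1`, and `u ~ v` when `det (u, v) = ±1`. The value of `det (u, v)` also gives the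
distance: `1` for `±1`, `2` for `±2, ±3`, and `3` for `0` with `u ≠ v` (then `v ∈ {2u, 3u}`, the
antipodal fibre of `u`). To confirm this formula it is enough to check two local conditions: every
`v ≠ u` has a neighbour one step closer to `u`, and the formula changes by at most one along an
edge. The intersection numbers are then finite counts.
-/

namespace SimpleGraph

variable {V : Type*} {G : SimpleGraph V}

theorem Walk.apply_le_apply_add_length {f : V → ℕ} (hf : ∀ v w, G.Adj v w → f w ≤ f v + 1)
    {x y : V} (p : G.Walk x y) : f y ≤ f x + p.length := by
  induction p with
  | nil => simp
  | cons hxy _ ih =>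
    rw [Walk.length_cons]
    have := hf _ _ hxy
    omega

theorem exists_walk_length_eq_of_exists_adj_add_one_eq {u : V} {f : V → ℕ} (h₀ : f u = 0)
    (hstep : ∀ v, v ≠ u → ∃ w, G.Adj w v ∧ f w + 1 = f v) (v : V) :
    ∃ p : G.Walk u v, p.length = f v := by
  induction hn : f v using Nat.strong_induction_on generalizing v with
  | _ n ih =>
    by_cases hvu : v = u
    · subst hvu
      exact ⟨.nil, by simp [← hn, h₀]⟩
    · obtain ⟨w, hwv, hw⟩ := hstep v hvu
      obtain ⟨p, hp⟩ := ih (f w) (by omega) w rfl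
      exact ⟨p.concat hwv, by simp [hp, ← hn, hw]⟩

theorem reachable_and_dist_eq {u : V} {f : V → ℕ} (h₀ : f u = 0)
    (hstep : ∀ v, v ≠ u → ∃ w, G.Adj w v ∧ f w + 1 = f v)
    (hf : ∀ v w, G.Adj v w → f w ≤ f v + 1) (v : V) :
    G.Reachable u v ∧ G.dist u v = f v := by
  obtain ⟨p, hp⟩ := exists_walk_length_eq_of_exists_adj_add_one_eq h₀ hstep v
  refine ⟨p.reachable, le_antisymm (hp ▸ dist_le p) ?_⟩
  obtain ⟨q, hq⟩ := p.reachable.exists_walk_length_eq_dist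
  simpa [h₀, hq] using q.apply_le_apply_add_length hf

theorem Connected.diam_eq [Finite V] (hG : G.Connected) {n : ℕ} (hle : ∀ u v, G.dist u v ≤ n)
    {u v : V} (huv : G.dist u v = n) : G.diam = n := by
  have : Nonempty V := ⟨u⟩
  have hfin : G.ediam ≠ ⊤ := connected_iff_ediam_ne_top.mp hG
  obtain ⟨x, y, hxy⟩ := G.exists_dist_eq_diam
  exact le_antisymm (hxy ▸ hle x y) (huv ▸ dist_le_diam hfin)

end SimpleGraph

namespace KleinGraph

open SimpleGraph Finset

/-- Vertex `3 * s + (c - 1)` stands for `±c • (1, s)` when `s < 7` and for `±c • (0, 1)` when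
`s = 7`, with `c ∈ {1, 2, 3}`. -/
def rep (i : Fin 24) : ZMod 7 × ZMod 7 :=
  let c : ZMod 7 := (i.val % 3 + 1 : ℕ)
  if i.val / 3 < 7 then (c, c * (i.val / 3 : ℕ)) else (0, c)

def det (u v : Fin 24) : ZMod 7 := (rep u).1 * (rep v).2 - (rep u).2 * (rep v).1

theorem det_swap (u v : Fin 24) : det v u = -det u v := by
  unfold det
  ring

theorem det_self (u : Fin 24) : det u u = 0 := by
  unfold det
  ring

def graph : SimpleGraph (Fin 24) where
  Adj u v := det u v = 1 ∨ det u v = -1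
  symm := ⟨fun u v => by
    rw [det_swap u v, neg_eq_iff_eq_neg, neg_inj]
    exact Or.symm⟩
  loopless := ⟨fun u => by
    rw [det_self]
    decide⟩

instance : DecidableRel graph.Adj := fun u v =>
  inferInstanceAs (Decidable (det u v = 1 ∨ det u v = -1))

def distance (u v : Fin 24) : ℕ :=
  if u = v then 0 else if det u v = 0 then 3 else if graph.Adj u v then 1 else 2

theorem exists_adj_distance_add_one_eq :
    ∀ u v, v ≠ u → ∃ w, graph.Adj w v ∧ distance u w + 1 = distance u v := by
  decide

theorem distance_le_distance_add_one_of_adj :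
    ∀ u v w, graph.Adj v w → distance u w ≤ distance u v + 1 := by
  decide

theorem reachable_and_dist_eq (u v : Fin 24) :
    graph.Reachable u v ∧ graph.dist u v = distance u v :=
  SimpleGraph.reachable_and_dist_eq (f := distance u) (if_pos rfl)
    (exists_adj_distance_add_one_eq u) (distance_le_distance_add_one_of_adj u) v

theorem dist_eq (u v : Fin 24) : graph.dist u v = distance u v :=
  (reachable_and_dist_eq u v).2

theorem connected : graph.Connected :=
  .mk fun u v => (reachable_and_dist_eq u v).1

theorem distance_le_three : ∀ u v, distance u v ≤ 3 := by
  decide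

theorem diam_eq : graph.diam = 3 :=
  connected.diam_eq (fun u v => dist_eq u v ▸ distance_le_three u v)
    (u := 0) (v := 1) (by rw [dist_eq]; decide)

theorem isRegularOfDegree : graph.IsRegularOfDegree 7 := by
  unfold IsRegularOfDegree
  decide

def b : ℕ → ℕ
  | 0 => 7
  | 1 => 4
  | 2 => 1
  | _ => 0

def c : ℕ → ℕ
  | 1 => 1
  | 2 => 2
  | 3 => 7
  | _ => 0

theorem card_adj_distance_eq_b_and_c : ∀ u v : Fin 24,
    #{w | graph.Adj v w ∧ distance u w = distance u v + 1} = b (distance u v) ∧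
      (distance u v ≠ 0 →
        #{w | graph.Adj v w ∧ distance u w = distance u v - 1} = c (distance u v)) := by
  decide

theorem ncard_adj_distance_succ {u v : Fin 24} {i : ℕ} (h : distance u v = i) :
    {w | graph.Adj v w ∧ distance u w = i + 1}.ncard = b i := by
  subst h
  simpa [Set.ncard_eq_toFinset_card'] using (card_adj_distance_eq_b_and_c u v).1

theorem ncard_adj_distance_pred {u v : Fin 24} {i : ℕ} (h : distance u v = i + 1) :
    {w | graph.Adj v w ∧ distance u w = i}.ncard = c (i + 1) := by
  simpa [Set.ncard_eq_toFinset_card', h] using (card_adj_distance_eq_b_and_c u v).2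

end KleinGraph

open scoped Classical in
/-- There is a connected 7-regular graph on 24 vertices (the Klein quartic
graph) of diameter 3 which is distance-regular with intersection array
`{7,4,1; 1,2,7}`. -/
theorem exists_klein_quartic_graph_distance_regular :
    ∃ K : SimpleGraph (Fin 24),
      K.Connected ∧
      K.IsRegularOfDegree 7 ∧
      K.diam = 3 ∧
      (∀ u v : Fin 24, K.dist u v = 0 →
        {w : Fin 24 | K.Adj v w ∧ K.dist u w = 1}.ncard = 7) ∧
      (∀ u v : Fin 24, K.dist u v = 1 →
        {w : Fin 24 | K.Adj v w ∧ K.dist u w = 2}.ncard = 4 ∧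
        {w : Fin 24 | K.Adj v w ∧ K.dist u w = 0}.ncard = 1) ∧
      (∀ u v : Fin 24, K.dist u v = 2 →
        {w : Fin 24 | K.Adj v w ∧ K.dist u w = 3}.ncard = 1 ∧
        {w : Fin 24 | K.Adj v w ∧ K.dist u w = 1}.ncard = 2) ∧
      (∀ u v : Fin 24, K.dist u v = 3 →
        {w : Fin 24 | K.Adj v w ∧ K.dist u w = 2}.ncard = 7) := by
  open KleinGraph in
  refine ⟨graph, connected, by convert isRegularOfDegree, diam_eq, ?_, ?_, ?_, ?_⟩ <;>
    simp only [dist_eq]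
  · exact fun u v h => ncard_adj_distance_succ h
  · exact fun u v h => ⟨ncard_adj_distance_succ h, ncard_adj_distance_pred h⟩
  · exact fun u v h => ⟨ncard_adj_distance_succ h, ncard_adj_distance_pred h⟩
  · exact fun u v h => ncard_adj_distance_pred h
end
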